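/- Let d be a prime, n ≥ 1, and ψ : (Fin n → ZMod d) → ℂ. Suppose for each site j : Fin n we are given an invertible matrix A j : Matrix (ZMod d) (ZMod d) ℂ, and define the locally transformed state (Aψ)(x) = Σ_{y : Fin n → ZMod d} (∏_j A j (x j) (y j)) · ψ(y). Then the Schmidt rank is invariant: r(Aψ) = r(ψ). In particular, the Schmidt measure E_S = log_d r is the same for all graph states in the same orbit under local complementation and local scaling. -/

import Mathlib

/-!
A local operation acts on `(κ → ι) → R` through the kernel `x y ↦ ∏ j, A j (x j) (y j)`, and
`A ↦ kernel` is multiplicative, so an invertible local operation is undone by the local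
operation of the inverses. It maps a sum of `r` products to a sum of `r` products (each
factor `f i j` becomes `A j *ᵥ f i j`), hence it and its inverse preserve the set of lengths
of product decompositions, and with it the least such length.
-/

open Matrix

/-- The Schmidt rank of `ψ : (Fin n → ZMod d) → ℂ`: the least `R` such that `ψ` is a
sum of `R` product functions. -/
noncomputable def schmidtRank {d n : ℕ} (ψ : (Fin n → ZMod d) → ℂ) : ℕ :=
  sInf {R : ℕ | ∃ f : Fin R → Fin n → ZMod d → ℂ, ∀ x, ψ x = ∑ i, ∏ j, f i j (x j)}

section LocalOperation

variable {κ ι R : Type*} [Fintype κ] [CommSemiring R]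

def piKernel (A : κ → Matrix ι ι R) : Matrix (κ → ι) (κ → ι) R :=
  of fun x y => ∏ j, A j (x j) (y j)

theorem piKernel_one [DecidableEq ι] : piKernel (1 : κ → Matrix ι ι R) = 1 := by
  ext x y
  by_cases hxy : x = y
  · subst hxy
    simp [piKernel]
  · obtain ⟨j, hj⟩ := Function.ne_iff.mp hxy
    simp only [piKernel, of_apply, Pi.one_apply, one_apply_ne hxy]
    exact Finset.prod_eq_zero (Finset.mem_univ j) (one_apply_ne hj)

variable [DecidableEq κ] [Fintype ι]

theorem piKernel_mul (A B : κ → Matrix ι ι R) :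
    piKernel (A * B) = piKernel A * piKernel B := by
  ext x z
  calc ∏ j, (A j * B j) (x j) (z j)
      = ∑ y : κ → ι, ∏ j, A j (x j) (y j) * B j (y j) (z j) := by
        simp only [mul_apply, Fintype.prod_sum]
    _ = ∑ y : κ → ι, (∏ j, A j (x j) (y j)) * ∏ j, B j (y j) (z j) := by
        simp only [Finset.prod_mul_distrib]

theorem piKernel_mulVec_prod (A : κ → Matrix ι ι R) (v : κ → ι → R) :
    piKernel A *ᵥ (fun y => ∏ j, v j (y j)) = fun x => ∏ j, (A j *ᵥ v j) (x j) := by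
  ext x
  calc ∑ y : κ → ι, (∏ j, A j (x j) (y j)) * ∏ j, v j (y j)
      = ∑ y : κ → ι, ∏ j, A j (x j) (y j) * v j (y j) := by
        simp only [Finset.prod_mul_distrib]
    _ = ∏ j, (A j *ᵥ v j) (x j) := by
        simp only [mulVec, dotProduct, Fintype.prod_sum]

def productDecompositionLengths (ψ : (κ → ι) → R) : Set ℕ :=
  {r | ∃ f : Fin r → κ → ι → R, ∀ x, ψ x = ∑ i, ∏ j, f i j (x j)}

theorem productDecompositionLengths_subset_piKernel_mulVec (A : κ → Matrix ι ι R)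
    (ψ : (κ → ι) → R) :
    productDecompositionLengths ψ ⊆ productDecompositionLengths (piKernel A *ᵥ ψ) := by
  rintro r ⟨f, hf⟩
  refine ⟨fun i j => A j *ᵥ f i j, fun x => ?_⟩
  have hψ : ψ = ∑ i, fun y => ∏ j, f i j (y j) := by
    ext y
    simp [hf y]
  simp [hψ, mulVec_sum, piKernel_mulVec_prod]

theorem productDecompositionLengths_piKernel_mulVec [DecidableEq ι] {A : κ → Matrix ι ι R}
    (hA : IsUnit A) (ψ : (κ → ι) → R) :
    productDecompositionLengths (piKernel A *ᵥ ψ) = productDecompositionLengths ψ := by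
  obtain ⟨u, rfl⟩ := hA
  refine (Set.Subset.antisymm ?_ (productDecompositionLengths_subset_piKernel_mulVec _ ψ))
  have hinv : piKernel ↑u⁻¹ *ᵥ (piKernel ↑u *ᵥ ψ) = ψ := by
    rw [mulVec_mulVec, ← piKernel_mul, Units.inv_mul, piKernel_one, one_mulVec]
  conv_rhs => rw [← hinv]
  exact productDecompositionLengths_subset_piKernel_mulVec _ _

end LocalOperation

theorem schmidtRank_local_invertible
    (d n : ℕ) [NeZero d]
    (ψ : (Fin n → ZMod d) → ℂ)
    (A : Fin n → Matrix (ZMod d) (ZMod d) ℂ) (hA : ∀ j, IsUnit (A j)) :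
    schmidtRank (fun x => ∑ y : Fin n → ZMod d, (∏ j, A j (x j) (y j)) * ψ y)
      = schmidtRank ψ := by
  have hφ : (fun x => ∑ y : Fin n → ZMod d, (∏ j, A j (x j) (y j)) * ψ y)
      = piKernel A *ᵥ ψ := rfl
  unfold schmidtRank
  rw [hφ]
  exact congrArg sInf (productDecompositionLengths_piKernel_mulVec (Pi.isUnit_iff.mpr hA) ψ)
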